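/- Let Ω be an open convex subset of a separable Banach space X and let f : X → ℝ be a strongly α(·)-paraconvex function on Ω. Then there is a dense G_δ set A_G ⊆ Ω such that f is Gâteaux differentiable at every point of A_G. -/

import Mathlib

/-!
A strongly paraconvex function is locally Lipschitz, and its difference quotients
`(f (x + t • h) - f x) / t` are nondecreasing in `t > 0` up to the error `C α(t‖h‖) / t`, which
tends to `0`. Hence the right directional derivative `f'₊(x; h)` exists at every `x ∈ Ω`, and
`h ↦ f'₊(x; h)` is subadditive, positively homogeneous and Lipschitz; it is linear as soon as
`f'₊(x; h) + f'₊(x; -h) ≤ 0` for all `h` in a countable dense set `D`.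

That inequality holds wherever, for every `ε > 0`, some symmetric second difference
`f (x + t • h) + f (x - t • h) - 2 f x` with `0 < t < ε` is below `ε t`, which for fixed `h` and
`ε` is an open condition. It defines a dense set: otherwise the first differences of `f` along
`x, x + t • h, …, x + (m + 2) t • h` would increase by `(m + 1) ε t` in total, more than the
Lipschitz bound `2 K t ‖h‖` allows once `m ε > 2 K ‖h‖`. Baire's theorem yields the dense `G_δ`.
-/

open Filter Topology Set Metric

def StronglyParaconvexOn {X : Type*} [SeminormedAddCommGroup X] [NormedSpace ℝ X]
    (Ω : Set X) (α : ℝ → ℝ) (C : ℝ) (f : X → ℝ) : Prop :=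
  ∀ x ∈ Ω, ∀ y ∈ Ω, ∀ l : ℝ, 0 ≤ l → l ≤ 1 →
    f (l • x + (1 - l) • y) ≤ l * f x + (1 - l) * f y + C * min l (1 - l) * α ‖x - y‖

section Modulus

variable {α : ℝ → ℝ}

theorem eq_zero_of_tendsto_div_nhdsGT (hα : ∀ t, 0 ≤ t → 0 ≤ α t)
    (hmono : MonotoneOn α (Ici 0)) (hlim : Tendsto (fun t => α t / t) (𝓝[>] 0) (𝓝 0)) :
    α 0 = 0 := by
  have hα_lim : Tendsto α (𝓝[>] 0) (𝓝 0) := by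
    have := hlim.mul (tendsto_nhdsWithin_of_tendsto_nhds (tendsto_id (x := 𝓝 (0 : ℝ))))
    rw [mul_zero] at this
    refine this.congr' ?_
    filter_upwards [self_mem_nhdsWithin] with t (ht : 0 < t)
    exact div_mul_cancel₀ _ ht.ne'
  refine le_antisymm (ge_of_tendsto hα_lim ?_) (hα 0 le_rfl)
  filter_upwards [self_mem_nhdsWithin] with t (ht : 0 < t)
  exact hmono self_mem_Ici ht.le ht.le

theorem tendsto_apply_mul_div_nhdsGT (hα0 : α 0 = 0)
    (hlim : Tendsto (fun t => α t / t) (𝓝[>] 0) (𝓝 0)) {c : ℝ} (hc : 0 ≤ c) :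
    Tendsto (fun t => α (t * c) / t) (𝓝[>] 0) (𝓝 0) := by
  rcases hc.eq_or_lt with rfl | hc
  · simp [hα0]
  have hscale : Tendsto (c * ·) (𝓝[>] (0 : ℝ)) (𝓝[>] 0) :=
    tendsto_iff_comap.2 (comap_mulLeft_nhdsGT_zero hc).ge
  have := (hlim.comp hscale).const_mul c
  rw [mul_zero] at this
  refine this.congr' ?_
  filter_upwards [self_mem_nhdsWithin] with t (ht : 0 < t)
  simp only [Function.comp_apply, mul_comm t c]
  field_simp

end Modulus

theorem exists_tendsto_nhdsGT_of_le {φ ψ : ℝ → ℝ}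
    (hle : ∀ᶠ t in 𝓝[>] 0, ∀ s ∈ Ioc 0 t, φ s ≤ ψ t)
    (hsub : Tendsto (fun t => ψ t - φ t) (𝓝[>] 0) (𝓝 0))
    (hbdd : ∃ M, ∀ᶠ t in 𝓝[>] 0, M ≤ φ t) :
    ∃ d, Tendsto φ (𝓝[>] 0) (𝓝 d) := by
  obtain ⟨M, hM⟩ := hbdd
  obtain ⟨T, hT, hTgood⟩ := mem_nhdsGT_iff_exists_Ioo_subset.1 (hle.and hM)
  have hT0 : (0 : ℝ) < T := hT
  have : Nonempty (Ioo 0 T) := ⟨⟨T / 2, by constructor <;> linarith⟩⟩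
  have hψM : ∀ t : Ioo 0 T, M ≤ ψ t := fun t =>
    (hTgood t.2).2.trans ((hTgood t.2).1 t ⟨t.2.1, le_rfl⟩)
  refine ⟨⨅ t : Ioo 0 T, ψ t, tendsto_order.2 ⟨fun a ha => ?_, fun a ha => ?_⟩⟩
  · filter_upwards [hsub.eventually_lt_const (sub_pos.2 ha), Ioo_mem_nhdsGT hT0] with s hs hsT
    have := ciInf_le ⟨M, forall_mem_range.2 hψM⟩ (⟨s, hsT⟩ : Ioo 0 T)
    linarith
  · obtain ⟨t, ht⟩ := exists_lt_of_ciInf_lt ha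
    filter_upwards [Ioo_mem_nhdsGT t.2.1] with s hs
    exact ((hTgood t.2).1 s ⟨hs.1, hs.2.le⟩).trans_lt ht

theorem mul_le_sub_sub_of_le_second_diff {a : ℕ → ℝ} {δ : ℝ} {n : ℕ}
    (h : ∀ k < n, δ ≤ a (k + 2) + a k - 2 * a (k + 1)) :
    n * δ ≤ (a (n + 1) - a n) - (a 1 - a 0) := by
  induction n with
  | zero => simp
  | succ n ih =>
    have := h n (Nat.lt_succ_self n)
    have := ih fun k hk => h k (hk.trans (Nat.lt_succ_self n))
    push_cast
    linarith

theorem IsOpen.subset_closure_inter_iInter {Y ι : Type*} [TopologicalSpace Y] [BaireSpace Y]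
    [Countable ι] {Ω : Set Y} (hΩ : IsOpen Ω) {U : ι → Set Y} (hU : ∀ i, IsOpen (U i))
    (hd : ∀ i, Ω ⊆ closure (U i)) : Ω ⊆ closure (Ω ∩ ⋂ i, U i) := by
  -- enlarge each `U i` to a dense open set of `Y` without changing its trace on `Ω`
  set V : ι → Set Y := fun i => U i ∪ (closure Ω)ᶜ
  have hV : Dense (⋂ i, V i) := by
    refine dense_iInter_of_isOpen (fun i => (hU i).union isClosed_closure.isOpen_compl)
      fun i => ?_
    intro z
    by_cases hz : z ∈ closure Ω
    · exact closure_mono subset_union_left (closure_minimal (hd i) isClosed_closure hz)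
    · exact subset_closure (Or.inr hz)
  refine (hV.open_subset_closure_inter hΩ).trans (closure_mono ?_)
  rintro y ⟨hyΩ, hyV⟩
  refine ⟨hyΩ, mem_iInter.2 fun i => ?_⟩
  exact (mem_iInter.1 hyV i).resolve_right (not_not.2 (subset_closure hyΩ))

theorem exists_continuousLinearMap_eq_of_subadditive {X : Type*} [SeminormedAddCommGroup X]
    [NormedSpace ℝ X] {p : X → ℝ} {K : ℝ} {D : Set X}
    (hadd : ∀ h k, p (h + k) ≤ p h + p k) (hsmul : ∀ c : ℝ, 0 < c → ∀ h, p (c • h) = c * p h)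
    (hbound : ∀ h, |p h| ≤ K * ‖h‖) (hD : Dense D) (hneg : ∀ h ∈ D, p h + p (-h) ≤ 0) :
    ∃ L : X →L[ℝ] ℝ, ⇑L = p := by
  have hp0 : p 0 = 0 := abs_nonpos_iff.1 (by simpa using hbound 0)
  have hcont : Continuous p := by
    refine (LipschitzWith.of_le_add_mul' K fun h k => ?_).continuous
    have := hadd (h - k) k
    rw [sub_add_cancel] at this
    rw [dist_eq_norm]
    linarith [(abs_le.1 (hbound (h - k))).2]
  have hodd : ∀ h, p (-h) = -p h := by
    have hle : ∀ h, p h + p (-h) ≤ 0 :=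
      hD.induction hneg (isClosed_le (by fun_prop) continuous_const)
    intro h
    have := hadd h (-h)
    rw [add_neg_cancel, hp0] at this
    linarith [hle h]
  have hadd' : ∀ h k, p (h + k) = p h + p k := by
    intro h k
    have := hadd (h + k) (-k)
    rw [add_neg_cancel_right, hodd] at this
    linarith [hadd h k]
  have hsmul' : ∀ (c : ℝ) h, p (c • h) = c * p h := by
    intro c h
    rcases lt_trichotomy c 0 with hc | rfl | hc
    · rw [← neg_neg c, neg_smul, hodd, hsmul _ (neg_pos.2 hc)]
      ring
    · simp [hp0]
    · exact hsmul c hc h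
  exact ⟨LinearMap.mkContinuous ⟨⟨p, hadd'⟩, hsmul'⟩ K fun h => hbound h, rfl⟩

theorem eventually_nhdsGT_add_smul_mem {X : Type*} [SeminormedAddCommGroup X] [NormedSpace ℝ X]
    {x : X} {U : Set X} (hU : U ∈ 𝓝 x) (h : X) : ∀ᶠ t in 𝓝[>] (0 : ℝ), x + t • h ∈ U := by
  refine nhdsWithin_le_nhds (Tendsto.eventually ?_ hU)
  simpa using ((tendsto_id (x := 𝓝 (0 : ℝ))).smul_const h).const_add x

theorem exists_mem_ball_eq_add_smul_sub {X : Type*} [NormedAddCommGroup X] [NormedSpace ℝ X]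
    {x₀ u v : X} {r : ℝ} (hr : 0 < r) (hu : u ∈ ball x₀ r) (hv : v ∈ ball x₀ r) (hvu : v ≠ u) :
    ∃ w ∈ ball x₀ (2 * r), ‖w - u‖ < 3 * r ∧
      v = u + (‖v - u‖ / (‖v - u‖ + r)) • (w - u) := by
  set s := ‖v - u‖
  have hs : 0 < s := norm_pos_iff.2 (sub_ne_zero.2 hvu)
  have hsr : s < 2 * r := by
    have := dist_triangle_right v u x₀
    rw [mem_ball] at hu hv
    rw [dist_eq_norm] at this
    linarith
  -- extend the segment from `u` through `v` by length `r`
  set w := v + (r / s) • (v - u)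
  have hwu : w - u = ((s + r) / s) • (v - u) := by
    match_scalars <;> field_simp; ring
  refine ⟨w, ?_, ?_, ?_⟩
  · have hvw : dist w v = r := by
      rw [dist_eq_norm, add_sub_cancel_left, norm_smul, Real.norm_of_nonneg (by positivity)]
      exact div_mul_cancel₀ r hs.ne'
    have := dist_triangle w v x₀
    rw [mem_ball] at hv ⊢
    linarith
  · rw [hwu, norm_smul, Real.norm_of_nonneg (by positivity), div_mul_cancel₀ _ hs.ne']
    linarith
  · rw [hwu, smul_smul, div_mul_div_cancel₀ (by positivity), div_self hs.ne', one_smul,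
      add_sub_cancel]

theorem LipschitzOnWith.abs_sub_le_mul {X : Type*} [SeminormedAddCommGroup X] [NormedSpace ℝ X]
    {K : NNReal} {s : Set X} {f : X → ℝ} (hf : LipschitzOnWith K f s) {x h : X} {t : ℝ}
    (hx : x ∈ s) (hxt : x + t • h ∈ s) (ht : 0 ≤ t) :
    |f (x + t • h) - f x| ≤ K * t * ‖h‖ := by
  have := hf.dist_le_mul _ hxt _ hx
  rwa [Real.dist_eq, dist_eq_norm, add_sub_cancel_left, norm_smul, Real.norm_of_nonneg ht,
    ← mul_assoc] at this

theorem LipschitzOnWith.eventually_abs_div_le {X : Type*} [SeminormedAddCommGroup X]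
    [NormedSpace ℝ X] {K : NNReal} {s : Set X} {f : X → ℝ} (hf : LipschitzOnWith K f s) {x : X}
    (hs : s ∈ 𝓝 x) (h : X) :
    ∀ᶠ t in 𝓝[>] (0 : ℝ), |(f (x + t • h) - f x) / t| ≤ K * ‖h‖ := by
  filter_upwards [eventually_nhdsGT_add_smul_mem hs h, self_mem_nhdsWithin]
    with t ht (htpos : 0 < t)
  rw [abs_div, abs_of_pos htpos, div_le_iff₀ htpos]
  linarith [hf.abs_sub_le_mul (mem_of_mem_nhds hs) ht htpos.le]

section RightDirDeriv

variable {X : Type*} [SeminormedAddCommGroup X] [NormedSpace ℝ X] {f : X → ℝ} {x h : X} {a b : ℝ}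

def HasRightDirDeriv (f : X → ℝ) (x h : X) (a : ℝ) : Prop :=
  Tendsto (fun t : ℝ => (f (x + t • h) - f x) / t) (𝓝[>] 0) (𝓝 a)

theorem HasRightDirDeriv.unique (ha : HasRightDirDeriv f x h a) (hb : HasRightDirDeriv f x h b) :
    a = b :=
  tendsto_nhds_unique ha hb

theorem HasRightDirDeriv.const_smul (ha : HasRightDirDeriv f x h a) {c : ℝ} (hc : 0 < c) :
    HasRightDirDeriv f x (c • h) (c * a) := by
  have hscale : Tendsto (c * ·) (𝓝[>] (0 : ℝ)) (𝓝[>] 0) :=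
    tendsto_iff_comap.2 (comap_mulLeft_nhdsGT_zero hc).ge
  refine ((ha.comp hscale).const_mul c).congr' ?_
  filter_upwards [self_mem_nhdsWithin] with t (ht : 0 < t)
  simp only [Function.comp_apply, smul_smul, mul_comm t c]
  field_simp

theorem HasRightDirDeriv.abs_le {K : NNReal} {s : Set X} (ha : HasRightDirDeriv f x h a)
    (hf : LipschitzOnWith K f s) (hs : s ∈ 𝓝 x) : |a| ≤ K * ‖h‖ :=
  le_of_tendsto ha.abs (hf.eventually_abs_div_le hs h)

theorem HasRightDirDeriv.tendsto_nhdsNE (ha : HasRightDirDeriv f x h a)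
    (ha' : HasRightDirDeriv f x (-h) (-a)) :
    Tendsto (fun t : ℝ => (f (x + t • h) - f x) / t) (𝓝[≠] 0) (𝓝 a) := by
  rw [← nhdsLT_sup_nhdsGT, tendsto_sup]
  refine ⟨?_, ha⟩
  have hneg : Tendsto Neg.neg (𝓝[<] (0 : ℝ)) (𝓝[>] 0) := by
    simpa using tendsto_neg_nhdsLT (a := (0 : ℝ))
  have := (ha'.comp hneg).neg
  rw [neg_neg] at this
  refine this.congr fun t => ?_
  simp only [Function.comp_apply, neg_smul_neg, div_neg, neg_neg]

end RightDirDeriv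

section SecondDiff

variable {X : Type*} [SeminormedAddCommGroup X] [NormedSpace ℝ X] {f : X → ℝ}

def secondDiffLt (f : X → ℝ) (h : X) (ε : ℝ) : Set X :=
  ⋃ t ∈ Ioo 0 ε, {y | f (y + t • h) + f (y - t • h) - 2 * f y < ε * t}

theorem isOpen_secondDiffLt (hf : Continuous f) (h : X) (ε : ℝ) :
    IsOpen (secondDiffLt f h ε) :=
  isOpen_biUnion fun _ _ => isOpen_lt (by fun_prop) (by fun_prop)

theorem LocallyLipschitzOn.subset_closure_secondDiffLt {Ω : Set X} (hf : LocallyLipschitzOn Ω f)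
    (hΩ : IsOpen Ω) (h : X) {ε : ℝ} (hε : 0 < ε) : Ω ⊆ closure (secondDiffLt f h ε) := by
  intro x hx
  obtain ⟨K, s, hs, hK⟩ := hf hx
  rw [nhdsWithin_eq_nhds.2 (hΩ.mem_nhds hx)] at hs
  refine Metric.mem_closure_iff.2 fun δ hδ => ?_
  obtain ⟨m, hm⟩ := exists_nat_gt (2 * K * ‖h‖ / ε)
  have hnear : ∀ᶠ t in 𝓝[>] (0 : ℝ), ∀ k ∈ Finset.range (m + 3),
      x + ((k : ℝ) * t) • h ∈ s ∩ ball x δ := by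
    refine (eventually_all_finset _).2 fun k _ => ?_
    filter_upwards
      [eventually_nhdsGT_add_smul_mem (inter_mem hs (ball_mem_nhds x hδ)) ((k : ℝ) • h)] with t ht
    rwa [smul_smul, mul_comm] at ht
  obtain ⟨t, hnear_t, ht0, htε⟩ := (hnear.and (Ioo_mem_nhdsGT hε)).exists
  set y : ℕ → X := fun k => x + ((k : ℝ) * t) • h
  have hy : ∀ k ≤ m + 2, y k ∈ s ∩ ball x δ := fun k hk =>
    hnear_t k (Finset.mem_range.2 (by omega))
  have hy_succ : ∀ k, y (k + 1) = y k + t • h := fun k => by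
    simp only [y]
    push_cast
    module
  by_contra! hfar
  have hsecond : ∀ k < m + 1, ε * t ≤ f (y (k + 2)) + f (y k) - 2 * f (y (k + 1)) := by
    intro k hk
    by_contra hlt
    refine (hfar (y (k + 1)) (mem_iUnion₂.2 ⟨t, ⟨ht0, htε⟩, ?_⟩)).not_gt ?_
    · have hnext : y (k + 1) + t • h = y (k + 2) := (hy_succ _).symm
      have hprev : y (k + 1) - t • h = y k := by rw [hy_succ, add_sub_cancel_right]
      show f (y (k + 1) + t • h) + f (y (k + 1) - t • h) - 2 * f (y (k + 1)) < ε * t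
      rw [hnext, hprev]
      linarith
    · simpa [dist_comm] using (hy (k + 1) (by omega)).2
  have htele := mul_le_sub_sub_of_le_second_diff (a := fun k => f (y k)) hsecond
  have hlast := hK.abs_sub_le_mul (hy (m + 1) (by omega)).1
    (hy_succ (m + 1) ▸ (hy (m + 2) (by omega)).1) ht0.le
  have hfirst := hK.abs_sub_le_mul (hy 0 (by omega)).1 (hy_succ 0 ▸ (hy 1 (by omega)).1) ht0.le
  rw [← hy_succ] at hlast hfirst
  have hm' : 2 * K * ‖h‖ < m * ε := (div_lt_iff₀ hε).1 hm
  push_cast at htele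
  nlinarith [abs_le.1 hlast, abs_le.1 hfirst]

end SecondDiff

namespace StronglyParaconvexOn

variable {X : Type*} [NormedAddCommGroup X] [NormedSpace ℝ X]
  {Ω : Set X} {α : ℝ → ℝ} {C : ℝ} {f : X → ℝ} {x h : X} {a b : ℝ}

theorem sub_le (hf : StronglyParaconvexOn Ω α C f) (hα : ∀ t, 0 ≤ t → 0 ≤ α t) (hC : 0 ≤ C)
    {y : X} (hx : x ∈ Ω) (hy : y ∈ Ω) {l : ℝ} (hl0 : 0 ≤ l) (hl1 : l ≤ 1) :
    f (y + l • (x - y)) - f y ≤ l * (f x - f y + C * α ‖x - y‖) := by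
  have hpara := hf x hx y hy l hl0 hl1
  have hmin : C * min l (1 - l) * α ‖x - y‖ ≤ C * l * α ‖x - y‖ := by
    gcongr
    · exact hα _ (norm_nonneg _)
    · exact min_le_left _ _
  rw [show y + l • (x - y) = l • x + (1 - l) • y by module]
  linarith

theorem sub_le_of_abs_le (hf : StronglyParaconvexOn Ω α C f) (hα : ∀ t, 0 ≤ t → 0 ≤ α t)
    (hmono : MonotoneOn α (Ici 0)) (hC : 0 ≤ C) {x₀ : X} {r M : ℝ} (hr : 0 < r)
    (hball : ball x₀ (2 * r) ⊆ Ω) (hM : ∀ y ∈ ball x₀ (2 * r), |f y| ≤ M)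
    ⦃u v : X⦄ (hu : u ∈ ball x₀ r) (hv : v ∈ ball x₀ r) :
    f v - f u ≤ (2 * M + C * α (3 * r)) / r * ‖v - u‖ := by
  rcases eq_or_ne v u with rfl | hvu
  · simp
  obtain ⟨w, hw, hwu, hvw⟩ := exists_mem_ball_eq_add_smul_sub hr hu hv hvu
  set s := ‖v - u‖
  have hu2 : u ∈ ball x₀ (2 * r) := ball_subset_ball (by linarith) hu
  have hstep := hf.sub_le hα hC (hball hw) (hball hu2) (l := s / (s + r)) (by positivity)
    ((div_le_one (by positivity)).2 (by linarith))
  rw [← hvw] at hstep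
  have hαw : α ‖w - u‖ ≤ α (3 * r) :=
    hmono (by simp) (by simp; positivity) hwu.le
  have hbracket : f w - f u + C * α ‖w - u‖ ≤ 2 * M + C * α (3 * r) := by
    have := (abs_le.1 (hM w hw)).2
    have := (abs_le.1 (hM u hu2)).1
    have := mul_le_mul_of_nonneg_left hαw hC
    linarith
  have hpos : 0 ≤ 2 * M + C * α (3 * r) := by
    have := abs_nonneg (f u) |>.trans (hM u hu2)
    have := mul_nonneg hC (hα (3 * r) (by positivity))
    linarith
  calc f v - f u ≤ s / (s + r) * (f w - f u + C * α ‖w - u‖) := hstep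
    _ ≤ s / (s + r) * (2 * M + C * α (3 * r)) := by gcongr
    _ ≤ s / r * (2 * M + C * α (3 * r)) := by gcongr; linarith [norm_nonneg (v - u)]
    _ = (2 * M + C * α (3 * r)) / r * s := by ring

theorem locallyLipschitzOn (hf : StronglyParaconvexOn Ω α C f) (hΩ : IsOpen Ω)
    (hα : ∀ t, 0 ≤ t → 0 ≤ α t) (hmono : MonotoneOn α (Ici 0)) (hC : 0 ≤ C)
    (hcont : ContinuousOn f Ω) : LocallyLipschitzOn Ω f := by
  intro x₀ hx₀
  have hbdd : ∀ᶠ y in 𝓝 x₀, y ∈ Ω ∧ |f y| < |f x₀| + 1 :=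
    Eventually.and (hΩ.mem_nhds hx₀) <| (hcont.continuousAt (hΩ.mem_nhds hx₀)).abs.eventually_lt
      continuousAt_const (lt_add_one _)
  obtain ⟨ε, hε, hεball⟩ := Metric.eventually_nhds_iff_ball.1 hbdd
  set r := ε / 2
  have hr : 0 < r := by positivity
  have h2r : 2 * r = ε := by ring
  have hsub := hf.sub_le_of_abs_le hα hmono hC hr (M := |f x₀| + 1)
    (fun y hy => (hεball y (h2r ▸ hy)).1) (fun y hy => (hεball y (h2r ▸ hy)).2.le)
  refine ⟨_, ball x₀ r, mem_nhdsWithin_of_mem_nhds (ball_mem_nhds x₀ hr),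
    LipschitzOnWith.of_le_add_mul' ((2 * (|f x₀| + 1) + C * α (3 * r)) / r) fun u hu v hv => ?_⟩
  rw [dist_eq_norm]
  linarith [hsub hv hu]

theorem div_le_div_add (hf : StronglyParaconvexOn Ω α C f) (hα : ∀ t, 0 ≤ t → 0 ≤ α t)
    (hC : 0 ≤ C) (hx : x ∈ Ω) {s t : ℝ} (hs : 0 < s) (hst : s ≤ t)
    (hxt : x + t • h ∈ Ω) :
    (f (x + s • h) - f x) / s ≤ (f (x + t • h) - f x) / t + C * α (t * ‖h‖) / t := by
  have ht : 0 < t := hs.trans_le hst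
  have hstep := hf.sub_le hα hC hxt hx (div_nonneg hs.le ht.le) ((div_le_one ht).2 hst)
  rw [add_sub_cancel_left, smul_smul, div_mul_cancel₀ _ ht.ne', norm_smul,
    Real.norm_of_nonneg ht.le] at hstep
  rw [div_le_iff₀ hs]
  calc f (x + s • h) - f x ≤ s / t * (f (x + t • h) - f x + C * α (t * ‖h‖)) := hstep
    _ = ((f (x + t • h) - f x) / t + C * α (t * ‖h‖) / t) * s := by ring

theorem le_div_add_of_hasRightDirDeriv (hf : StronglyParaconvexOn Ω α C f)
    (hα : ∀ t, 0 ≤ t → 0 ≤ α t) (hC : 0 ≤ C) (hx : x ∈ Ω) {t : ℝ} (ht : 0 < t)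
    (hxt : x + t • h ∈ Ω) (ha : HasRightDirDeriv f x h a) :
    a ≤ (f (x + t • h) - f x) / t + C * α (t * ‖h‖) / t := by
  refine le_of_tendsto ha ?_
  filter_upwards [Ioo_mem_nhdsGT ht] with s hs
  exact hf.div_le_div_add hα hC hx hs.1 hs.2.le hxt

theorem exists_hasRightDirDeriv (hf : StronglyParaconvexOn Ω α C f) (hΩ : IsOpen Ω)
    (hα : ∀ t, 0 ≤ t → 0 ≤ α t) (hα0 : α 0 = 0)
    (hlim : Tendsto (fun t => α t / t) (𝓝[>] 0) (𝓝 0)) (hC : 0 ≤ C) {K : NNReal} {s : Set X}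
    (hK : LipschitzOnWith K f s) (hs : s ∈ 𝓝 x) (hx : x ∈ Ω) (h : X) :
    ∃ a, HasRightDirDeriv f x h a := by
  refine exists_tendsto_nhdsGT_of_le
    (ψ := fun t => (f (x + t • h) - f x) / t + C * α (t * ‖h‖) / t) ?_ ?_ ?_
  · filter_upwards [eventually_nhdsGT_add_smul_mem (hΩ.mem_nhds hx) h] with t ht s hs
    exact hf.div_le_div_add hα hC hx hs.1 hs.2 ht
  · simpa [mul_div_assoc] using (tendsto_apply_mul_div_nhdsGT hα0 hlim (norm_nonneg h)).const_mul C
  · refine ⟨-(K * ‖h‖), ?_⟩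
    filter_upwards [hK.eventually_abs_div_le hs h] with t ht
    exact neg_le_of_abs_le ht

theorem le_add_of_hasRightDirDeriv (hf : StronglyParaconvexOn Ω α C f) (hΩ : IsOpen Ω)
    (hα : ∀ t, 0 ≤ t → 0 ≤ α t) (hα0 : α 0 = 0)
    (hlim : Tendsto (fun t => α t / t) (𝓝[>] 0) (𝓝 0)) (hC : 0 ≤ C) (hx : x ∈ Ω) {k : X} {c : ℝ}
    (ha : HasRightDirDeriv f x h a) (hb : HasRightDirDeriv f x k b)
    (hc : HasRightDirDeriv f x (h + k) c) : c ≤ a + b := by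
  have hrhs := (((ha.const_smul two_pos).const_mul (1 / 2)).add
    ((hb.const_smul two_pos).const_mul (1 / 2))).add
    ((tendsto_apply_mul_div_nhdsGT hα0 hlim (norm_nonneg ((2 : ℝ) • h - (2 : ℝ) • k))).const_mul
      (C / 2))
  refine le_of_tendsto_of_tendsto hc (by convert hrhs using 2; ring) ?_
  have hseg := eventually_nhdsGT_add_smul_mem (hΩ.mem_nhds hx)
  filter_upwards [hseg ((2 : ℝ) • h), hseg ((2 : ℝ) • k), self_mem_nhdsWithin]
    with t hth htk (ht : 0 < t)
  -- `x + t • (h + k)` is the midpoint of `x + 2 t • h` and `x + 2 t • k`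
  have hmid := hf.sub_le hα hC hth htk (l := 1 / 2) (by norm_num) (by norm_num)
  rw [show x + t • (2 : ℝ) • k + (1 / 2 : ℝ) • (x + t • (2 : ℝ) • h - (x + t • (2 : ℝ) • k))
      = x + t • (h + k) by module,
    show x + t • (2 : ℝ) • h - (x + t • (2 : ℝ) • k) = t • ((2 : ℝ) • h - (2 : ℝ) • k) by module,
    norm_smul, Real.norm_of_nonneg ht.le] at hmid
  calc (f (x + t • (h + k)) - f x) / t
      ≤ ((f (x + t • (2 : ℝ) • h) - f x) / 2 + (f (x + t • (2 : ℝ) • k) - f x) / 2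
          + C / 2 * α (t * ‖(2 : ℝ) • h - (2 : ℝ) • k‖)) / t := by
        gcongr
        linarith
    _ = _ := by ring

theorem add_nonpos_of_hasRightDirDeriv (hf : StronglyParaconvexOn Ω α C f) (hΩ : IsOpen Ω)
    (hα : ∀ t, 0 ≤ t → 0 ≤ α t) (hα0 : α 0 = 0)
    (hlim : Tendsto (fun t => α t / t) (𝓝[>] 0) (𝓝 0)) (hC : 0 ≤ C) (hx : x ∈ Ω)
    (hxh : ∀ n : ℕ, x ∈ secondDiffLt f h (1 / (n + 1)))
    (ha : HasRightDirDeriv f x h a) (hb : HasRightDirDeriv f x (-h) b) : a + b ≤ 0 := by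
  refine le_of_forall_pos_lt_add fun ε hε => ?_
  have herr := (tendsto_apply_mul_div_nhdsGT hα0 hlim (norm_nonneg h)).const_mul C
  rw [mul_zero] at herr
  have hseg := eventually_nhdsGT_add_smul_mem (hΩ.mem_nhds hx)
  obtain ⟨T, hT, hgood⟩ := mem_nhdsGT_iff_exists_Ioo_subset.1 <|
    (hseg h).and <| (hseg (-h)).and <| herr.eventually_lt_const (by positivity : 0 < ε / 4)
  obtain ⟨n, hn⟩ := exists_nat_one_div_lt (lt_min hT (half_pos hε))
  obtain ⟨t, ⟨ht0, htn⟩, hsecond⟩ := mem_iUnion₂.1 (hxh n)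
  obtain ⟨hth, htmh, herr_t⟩ := hgood ⟨ht0, htn.trans (hn.trans_le (min_le_left _ _))⟩
  have h1 := hf.le_div_add_of_hasRightDirDeriv hα hC hx ht0 hth ha
  have h2 := hf.le_div_add_of_hasRightDirDeriv hα hC hx ht0 htmh hb
  rw [norm_neg, smul_neg, ← sub_eq_add_neg] at h2
  have hquot : (f (x + t • h) - f x) / t + (f (x - t • h) - f x) / t < 1 / (n + 1) := by
    rw [← add_div, div_lt_iff₀ ht0]
    linarith [show f (x + t • h) + f (x - t • h) - 2 * f x < 1 / (n + 1) * t from hsecond]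
  rw [mul_div_assoc] at h1 h2
  linarith [hn.trans_le (min_le_right _ _)]

end StronglyParaconvexOn

theorem rolewicz_gateaux_scalar_general
    {X : Type*} [NormedAddCommGroup X] [NormedSpace ℝ X] [CompleteSpace X]
    [TopologicalSpace.SeparableSpace X]
    (Ω : Set X) (hΩopen : IsOpen Ω)
    (α : ℝ → ℝ) (hαnonneg : ∀ t, 0 ≤ t → 0 ≤ α t) (hαmono : MonotoneOn α (Ici 0))
    (hαlim : Tendsto (fun t => α t / t) (𝓝[>] (0 : ℝ)) (𝓝 0))
    (f : X → ℝ) (hf : Continuous f) (C : ℝ) (hC : 0 < C)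
    (hpara : ∀ x ∈ Ω, ∀ y ∈ Ω, ∀ l : ℝ, 0 ≤ l → l ≤ 1 →
        f (l • x + (1 - l) • y)
          ≤ l * f x + (1 - l) * f y + C * min l (1 - l) * α ‖x - y‖) :
    ∃ A : Set X, A ⊆ Ω ∧ IsGδ A ∧ Ω ⊆ closure A ∧
      ∀ x₀ ∈ A, ∃ L : X →L[ℝ] ℝ, ∀ h : X,
        Tendsto (fun t : ℝ => (f (x₀ + t • h) - f x₀) / t) (𝓝[≠] 0) (𝓝 (L h)) := by
  have hfpc : StronglyParaconvexOn Ω α C f := hpara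
  have hα0 : α 0 = 0 := eq_zero_of_tendsto_div_nhdsGT hαnonneg hαmono hαlim
  have hlip := hfpc.locallyLipschitzOn hΩopen hαnonneg hαmono hC.le hf.continuousOn
  obtain ⟨D, hDc, hDd⟩ := TopologicalSpace.exists_countable_dense X
  have := hDc.to_subtype
  set U : D × ℕ → Set X := fun p => secondDiffLt f p.1 (1 / (p.2 + 1))
  have hU : ∀ p, IsOpen (U p) := fun p => isOpen_secondDiffLt hf _ _
  refine ⟨Ω ∩ ⋂ p, U p, inter_subset_left, hΩopen.isGδ.inter (.iInter_of_isOpen hU),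
    hΩopen.subset_closure_inter_iInter hU fun p =>
      hlip.subset_closure_secondDiffLt hΩopen _ Nat.one_div_pos_of_nat, ?_⟩
  rintro x ⟨hx, hxU⟩
  obtain ⟨K, s, hs, hK⟩ := hlip hx
  rw [nhdsWithin_eq_nhds.2 (hΩopen.mem_nhds hx)] at hs
  choose d hd using hfpc.exists_hasRightDirDeriv hΩopen hαnonneg hα0 hαlim hC.le hK hs hx
  obtain ⟨L, rfl⟩ := exists_continuousLinearMap_eq_of_subadditive
    (fun h k => hfpc.le_add_of_hasRightDirDeriv hΩopen hαnonneg hα0 hαlim hC.le hx (hd h) (hd k)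
      (hd (h + k)))
    (fun c hc h => ((hd h).const_smul hc).unique (hd (c • h)) |>.symm)
    (fun h => (hd h).abs_le hK hs) hDd
    (fun h hh => hfpc.add_nonpos_of_hasRightDirDeriv hΩopen hαnonneg hα0 hαlim hC.le hx
      (fun n => mem_iInter.1 hxU (⟨h, hh⟩, n)) (hd h) (hd (-h)))
  exact ⟨L, fun h => (hd h).tendsto_nhdsNE (by simpa using hd (-h))⟩

/-- Rolewicz. Let `Ω` be an open convex subset of a separable Banach
space `X` and `f : X → ℝ` a strongly `α(·)`-paraconvex function on `Ω`. Then there is a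
dense `G_δ` subset `A_G` of `Ω` such that `f` is Gâteaux differentiable at every point
of `A_G`. -/
theorem rolewicz_gateaux_scalar
    {X : Type*} [NormedAddCommGroup X] [NormedSpace ℝ X] [CompleteSpace X]
    [TopologicalSpace.SeparableSpace X]
    (Ω : Set X) (hΩopen : IsOpen Ω) (hΩconv : Convex ℝ Ω)
    (α : ℝ → ℝ) (hαnonneg : ∀ t, 0 ≤ t → 0 ≤ α t) (hαmono : MonotoneOn α (Ici 0))
    (hαlim : Tendsto (fun t => α t / t) (𝓝[>] (0 : ℝ)) (𝓝 0))
    (f : X → ℝ) (hf : Continuous f) (C : ℝ) (hC : 0 < C)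
    (hpara : ∀ x ∈ Ω, ∀ y ∈ Ω, ∀ l : ℝ, 0 ≤ l → l ≤ 1 →
        f (l • x + (1 - l) • y)
          ≤ l * f x + (1 - l) * f y + C * min l (1 - l) * α ‖x - y‖) :
    ∃ A : Set X, A ⊆ Ω ∧ IsGδ A ∧ Ω ⊆ closure A ∧
      ∀ x₀ ∈ A, ∃ L : X →L[ℝ] ℝ, ∀ h : X,
        Tendsto (fun t : ℝ => (f (x₀ + t • h) - f x₀) / t) (𝓝[≠] 0) (𝓝 (L h)) :=
  rolewicz_gateaux_scalar_general Ω hΩopen α hαnonneg hαmono hαlim f hf C hC hpara
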